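/- Let 0 < α < 1, 0 < β < 1 and α + β ≥ 1. Then the Laplace transformation φ ↦ L(φ), where L(φ)(z) := ∫_ℝ e^{−zt} φ(t) dt, is a bijection from S_α^β(1) onto J*S_β^α: it is injective on S_α^β(1), and for every f ∈ J*S_β^α there exists φ ∈ S_α^β(1) with L(φ) = f. -/

import Mathlib

open Complex MeasureTheory

noncomputable section

/-- One-dimensional Gelfand–Shilov space `S_α^β(1)`. -/
def GelfandShilov1 (α β : ℝ) (φ : ℂ → ℂ) : Prop :=
  Differentiable ℂ φ ∧
  ∃ C : ℝ, 0 < C ∧ ∃ a : ℝ, 0 < a ∧ ∃ b : ℝ, 0 < b ∧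
    ∀ x y : ℝ,
      ‖φ ((x : ℂ) + (y : ℂ) * Complex.I)‖ ≤
        C * Real.exp (-a * |x| ^ (1 / α) + b * |y| ^ (1 / (1 - β)))

/-- The space `J*S_β^α`: entire functions `f` with
`|f(x+iy)| ≤ C exp(-a |y|^{1/β} + b |x|^{1/(1-α)})`. -/
def JstarS (β α : ℝ) (f : ℂ → ℂ) : Prop :=
  Differentiable ℂ f ∧
  ∃ C : ℝ, 0 < C ∧ ∃ a : ℝ, 0 < a ∧ ∃ b : ℝ, 0 < b ∧
    ∀ x y : ℝ,
      ‖f ((x : ℂ) + (y : ℂ) * Complex.I)‖ ≤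
        C * Real.exp (-a * |y| ^ (1 / β) + b * |x| ^ (1 / (1 - α)))

/-- The Laplace transform `L(φ)(z) = ∫ℝ e^{-zt} φ(t) dt`. -/
def LaplaceT (φ : ℂ → ℂ) (z : ℂ) : ℂ :=
  ∫ t : ℝ, Complex.exp (-z * (t : ℂ)) * φ (t : ℂ)

/-!
Shifting the line of integration in `L φ(z) = ∫ exp(-z t) φ(t) dt` to `Im t = s`, and absorbing
`exp(-x t)` into half of the decay `exp(-a |t| ^ (1/α))` by Young's inequality, gives
`|L φ(x + i y)| ≤ C' exp(y s + b |s| ^ (1/(1-β)) + c |x| ^ (1/(1-α)))`. Taking `s` of sign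
opposite to `y` with `|s| ∼ |y| ^ ((1-β)/β)` bounds the first two terms by `-a' |y| ^ (1/β)`.

On the imaginary axis `L` is the Fourier transform, so injectivity is Fourier inversion followed
by the identity theorem. For `f ∈ J*S_β^α`, the same estimate applied to `h(w) = f(2π i w)`, which
lies in `S_β^α`, shows that `φ(w) = L h(-2π i w)` lies in `S_α^β`; on `ℝ`, `φ` is the inverse
Fourier transform of `h`, so `L φ = 𝓕 (𝓕⁻ h) = f` on `i ℝ`, hence everywhere.
-/

open Filter Set Topology FourierTransform
open scoped Real

lemma integrable_abs_rpow_mul_exp_neg_mul_abs_rpow {s a p : ℝ} (hs : -1 < s) (ha : 0 < a)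
    (hp : 0 < p) : Integrable fun t : ℝ => |t| ^ s * Real.exp (-a * |t| ^ p) := by
  -- stated on `Ioi (-0)`, the shape `IntegrableOn.comp_neg_Iio` expects
  have hIoi : IntegrableOn (fun t : ℝ => |t| ^ s * Real.exp (-a * |t| ^ p)) (Ioi (-0)) := by
    rw [neg_zero]
    exact (integrableOn_rpow_mul_exp_neg_mul_rpow hs hp ha).congr_fun
      (fun t ht => by simp [abs_of_pos (mem_Ioi.mp ht)]) measurableSet_Ioi
  rw [← integrableOn_univ, ← Iic_union_Ioi (a := (0 : ℝ)), integrableOn_union,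
    integrableOn_Iic_iff_integrableOn_Iio]
  exact ⟨by simpa using hIoi.comp_neg_Iio, by simpa using hIoi⟩

lemma integrable_exp_neg_mul_abs_rpow {a p : ℝ} (ha : 0 < a) (hp : 0 < p) :
    Integrable fun t : ℝ => Real.exp (-a * |t| ^ p) := by
  simpa using integrable_abs_rpow_mul_exp_neg_mul_abs_rpow (s := 0) (by norm_num) ha hp

lemma tendsto_exp_neg_mul_abs_rpow_cocompact {a p : ℝ} (ha : 0 < a) (hp : 0 < p) :
    Tendsto (fun t : ℝ => Real.exp (-a * |t| ^ p)) (cocompact ℝ) (𝓝 0) := by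
  have h := (tendsto_rpow_atTop hp).comp (tendsto_norm_cocompact_atTop (E := ℝ))
  simp only [Function.comp_def, Real.norm_eq_abs] at h
  exact Real.tendsto_exp_atBot.comp ((tendsto_const_mul_atBot_of_neg (neg_neg_of_pos ha)).mpr h)

lemma exists_mul_le_mul_abs_rpow_add {p q a : ℝ} (hpq : p.HolderConjugate q) (ha : 0 < a) :
    ∃ c > 0, ∀ x t : ℝ, x * t ≤ a * |t| ^ p + c * |x| ^ q := by
  have hp := hpq.pos
  have hq := hpq.symm.pos
  set k := (a * p) ^ p⁻¹
  have hk : 0 < k := by positivity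
  have hkp : k ^ p = a * p := by
    rw [← Real.rpow_mul (by positivity), inv_mul_cancel₀ hp.ne', Real.rpow_one]
  refine ⟨(k ^ q * q)⁻¹, by positivity, fun x t => ?_⟩
  calc x * t ≤ |x| * |t| := (le_abs_self _).trans (abs_mul x t).le
    _ = (k * |t|) * (|x| / k) := by field_simp
    _ ≤ (k * |t|) ^ p / p + (|x| / k) ^ q / q :=
        Real.young_inequality_of_nonneg (by positivity) (by positivity) hpq
    _ = a * |t| ^ p + (k ^ q * q)⁻¹ * |x| ^ q := by
        rw [Real.mul_rpow hk.le (abs_nonneg t), Real.div_rpow (abs_nonneg x) hk.le, hkp]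
        field_simp

/-- The witness `s = -sign y · (|y| / 2b) ^ (q' - 1)` has the scaling of the minimiser of
`y s + b |s| ^ q` and makes `b |s| ^ q = |y s| / 2`. -/
lemma exists_mul_add_mul_abs_rpow_le {q q' b : ℝ} (hq : q.HolderConjugate q') (hb : 0 < b) :
    ∃ a > 0, ∀ y : ℝ, ∃ s : ℝ, y * s + b * |s| ^ q ≤ -a * |y| ^ q' := by
  set ε := (2 * b) ^ (-(q - 1)⁻¹)
  have hε : 0 < ε := by positivity
  have hεq : b * ε ^ q = ε / 2 := by
    have : ε ^ (q - 1) = (2 * b)⁻¹ := by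
      rw [← Real.rpow_mul (by positivity), neg_mul, inv_mul_cancel₀ hq.sub_one_ne_zero,
        Real.rpow_neg_one]
    rw [Real.rpow_sub_one hε.ne'] at this
    field_simp at this ⊢
    linarith
  refine ⟨ε / 2, by positivity, fun y => ?_⟩
  set r := ε * |y| ^ (q' - 1)
  obtain ⟨s, hys, hs⟩ : ∃ s, y * s = -(|y| * r) ∧ |s| = r := by
    rcases le_or_gt 0 y with hy | hy
    · exact ⟨-r, by rw [abs_of_nonneg hy]; ring, by rw [abs_neg, abs_of_nonneg (by positivity)]⟩
    · exact ⟨r, by rw [abs_of_neg hy]; ring, abs_of_nonneg (by positivity)⟩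
  have hyq' : |y| * |y| ^ (q' - 1) = |y| ^ q' := by
    rw [← Real.rpow_one_add' (abs_nonneg y) (by linarith [hq.symm.pos]), add_sub_cancel]
  have hrq : r ^ q = ε ^ q * |y| ^ q' := by
    rw [Real.mul_rpow hε.le (by positivity), ← Real.rpow_mul (abs_nonneg y),
      hq.symm.sub_one_mul_conj]
  refine ⟨s, ?_⟩
  rw [hys, hs, hrq, show |y| * r = ε * |y| ^ q' by rw [← hyq']; ring]
  nlinarith [hεq, show 0 ≤ |y| ^ q' by positivity]

section ContourShift

variable {H : ℂ → ℂ} {B : ℝ → ℝ} {s : ℝ}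

lemma tendsto_integral_vertical_cocompact (hB : Tendsto B (cocompact ℝ) (𝓝 0))
    (hbound : ∀ t : ℝ, ∀ σ ∈ uIcc 0 s, ‖H (t + σ * I)‖ ≤ B t) :
    Tendsto (fun t : ℝ => ∫ σ in (0 : ℝ)..s, H (t + σ * I)) (cocompact ℝ) (𝓝 0) := by
  rw [tendsto_zero_iff_norm_tendsto_zero]
  refine squeeze_zero (fun _ => norm_nonneg _) (fun t => ?_) (by simpa using hB.mul_const |s|)
  simpa using intervalIntegral.norm_integral_le_of_norm_le_const fun σ hσ =>
    hbound t σ (uIoc_subset_uIcc hσ)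

theorem integral_add_mul_I_eq_integral (hH : Differentiable ℂ H) (hBi : Integrable B)
    (hB : Tendsto B (cocompact ℝ) (𝓝 0))
    (hbound : ∀ t : ℝ, ∀ σ ∈ uIcc 0 s, ‖H (t + σ * I)‖ ≤ B t) :
    ∫ t : ℝ, H (t + s * I) = ∫ t : ℝ, H t := by
  have hint : ∀ σ ∈ uIcc 0 s, Integrable fun t : ℝ => H (t + σ * I) := fun σ hσ =>
    hBi.mono' (hH.continuous.comp (by fun_prop)).aestronglyMeasurable
      (ae_of_all _ fun t => hbound t σ hσ)
  have hvert := tendsto_integral_vertical_cocompact hB hbound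
  have hrect : ∀ T : ℝ, ∫ t in -T..T, H (t + s * I) = (∫ t in -T..T, H t) +
      (I • ∫ σ in (0 : ℝ)..s, H (T + σ * I)) - I • ∫ σ in (0 : ℝ)..s, H (-T + σ * I) := by
    intro T
    have := integral_boundary_rect_eq_zero_of_differentiableOn H (-T) (T + s * I)
      hH.differentiableOn
    simp only [neg_re, neg_im, ofReal_re, ofReal_im, add_re, add_im, mul_re, mul_im, I_re, I_im,
      neg_zero, zero_mul, mul_zero, mul_one, sub_zero, zero_add, add_zero, ofReal_zero,
      ofReal_neg] at this
    linear_combination -this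
  have hlim := ((intervalIntegral_tendsto_integral (by simpa using hint 0 left_mem_uIcc)
    tendsto_neg_atTop_atBot tendsto_id).add ((hvert.mono_left atTop_le_cocompact).const_smul I)).sub
    ((hvert.comp (tendsto_neg_atTop_atBot.mono_right atBot_le_cocompact)).const_smul I)
  simp only [smul_zero, add_zero, sub_zero] at hlim
  refine tendsto_nhds_unique (intervalIntegral_tendsto_integral (hint s right_mem_uIcc)
    tendsto_neg_atTop_atBot tendsto_id) ?_
  simpa [hrect] using hlim

end ContourShift


lemma norm_cexp_neg_mul_add_mul_I (z : ℂ) (t σ : ℝ) :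
    ‖Complex.exp (-z * (t + σ * I))‖ = Real.exp (-z.re * t + z.im * σ) := by
  rw [Complex.norm_exp]
  congr 1
  simp only [neg_mul, neg_re, mul_re, add_re, ofReal_re, ofReal_im, I_re, I_im, add_im, mul_im]
  ring

lemma exists_norm_cexp_neg_mul_mul_exp_le {p p' a : ℝ} (hp : p.HolderConjugate p')
    (ha : 0 < a) : ∃ c > 0, ∀ (z : ℂ) (t σ : ℝ),
      ‖Complex.exp (-z * (t + σ * I))‖ * Real.exp (-a * |t| ^ p) ≤
        Real.exp (z.im * σ + c * |z.re| ^ p') * Real.exp (-(a / 2) * |t| ^ p) := by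
  obtain ⟨c, hc, hyoung⟩ := exists_mul_le_mul_abs_rpow_add hp (half_pos ha)
  refine ⟨c, hc, fun z t σ => ?_⟩
  rw [norm_cexp_neg_mul_add_mul_I, ← Real.exp_add, ← Real.exp_add, Real.exp_le_exp]
  linarith [abs_neg z.re ▸ hyoung (-z.re) t]

lemma exists_norm_cexp_neg_mul_ofReal_mul_le {φ : ℂ → ℂ} {C a p : ℝ} (hC : 0 ≤ C) (ha : 0 < a)
    (hp : 1 < p) (hbound : ∀ t : ℝ, ‖φ t‖ ≤ C * Real.exp (-a * |t| ^ p)) :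
    ∃ c > 0, ∀ (z : ℂ) (t : ℝ), ‖Complex.exp (-z * t) * φ t‖ ≤
      C * Real.exp (c * |z.re| ^ p.conjExponent) * Real.exp (-(a / 2) * |t| ^ p) := by
  obtain ⟨c, hc, hkernel⟩ :=
    exists_norm_cexp_neg_mul_mul_exp_le (Real.HolderConjugate.conjExponent hp) ha
  refine ⟨c, hc, fun z t => ?_⟩
  have h := hkernel z t 0
  simp only [ofReal_zero, zero_mul, add_zero, mul_zero, zero_add] at h
  calc ‖Complex.exp (-z * t) * φ t‖ ≤ ‖Complex.exp (-z * t)‖ * (C * Real.exp (-a * |t| ^ p)) := by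
        rw [norm_mul]; gcongr; exact hbound t
    _ ≤ _ := by
        rw [mul_left_comm, mul_assoc]
        exact mul_le_mul_of_nonneg_left h hC

theorem differentiable_laplaceT {φ : ℂ → ℂ} (hφ : Continuous fun t : ℝ => φ t) {C a p : ℝ}
    (hC : 0 ≤ C) (ha : 0 < a) (hp : 1 < p)
    (hbound : ∀ t : ℝ, ‖φ t‖ ≤ C * Real.exp (-a * |t| ^ p)) :
    Differentiable ℂ (LaplaceT φ) := by
  intro z₀
  set p' := p.conjExponent
  obtain ⟨c, hc, hF⟩ := exists_norm_cexp_neg_mul_ofReal_mul_le hC ha hp hbound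
  set R := |z₀.re| + 1
  have hball : ∀ z ∈ Metric.ball z₀ 1, |z.re| ^ p' ≤ R ^ p' := by
    intro z hz
    have := (abs_re_le_norm (z - z₀)).trans (mem_ball_iff_norm.mp hz).le
    rw [sub_re] at this
    exact Real.rpow_le_rpow (abs_nonneg _) (by linarith [abs_sub_abs_le_abs_sub z.re z₀.re])
      (Real.HolderConjugate.conjExponent hp).symm.nonneg
  have hcont : ∀ z : ℂ, Continuous fun t : ℝ => Complex.exp (-z * t) * φ t := fun z =>
    (by fun_prop : Continuous fun t : ℝ => Complex.exp (-z * t)).mul hφ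
  have hint := integrable_abs_rpow_mul_exp_neg_mul_abs_rpow (s := 1) (by norm_num) (half_pos ha)
    (zero_lt_one.trans hp)
  refine (hasDerivAt_integral_of_dominated_loc_of_deriv_le (Metric.ball_mem_nhds z₀ one_pos)
    (bound := fun t => C * Real.exp (c * R ^ p') * (|t| ^ (1 : ℝ) * Real.exp (-(a / 2) * |t| ^ p)))
    (F' := fun z (t : ℝ) => -t * (Complex.exp (-z * t) * φ t))
    (Eventually.of_forall fun z => (hcont z).aestronglyMeasurable)
    (((integrable_exp_neg_mul_abs_rpow (half_pos ha) (zero_lt_one.trans hp)).const_mul _).mono'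
      (hcont z₀).aestronglyMeasurable (ae_of_all _ (hF z₀)))
    (by fun_prop : Continuous _).aestronglyMeasurable (ae_of_all _ fun t z hz => ?_)
    (hint.const_mul _) (ae_of_all _ fun t z _ => ?_)).2.differentiableAt
  · rw [norm_mul, norm_neg, norm_real, Real.norm_eq_abs, Real.rpow_one]
    calc |t| * ‖Complex.exp (-z * t) * φ t‖
        ≤ |t| * (C * Real.exp (c * |z.re| ^ p') * Real.exp (-(a / 2) * |t| ^ p)) := by
          gcongr; exact hF z t
      _ ≤ _ := by
          rw [mul_left_comm]
          gcongr C * Real.exp (c * ?_) * _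
          exact hball z hz
  · have hlin : HasDerivAt (fun w : ℂ => -w * t) (-t) z := by
      simp_rw [neg_mul_comm]
      exact hasDerivAt_mul_const _
    have hderiv := hlin.cexp.mul_const (φ t)
    rwa [mul_comm _ (-(t : ℂ)), mul_assoc] at hderiv

section HorizontalLines

variable {φ : ℂ → ℂ} {p p' q C a b : ℝ}

lemma exists_norm_laplace_integrand_le (hp : p.HolderConjugate p') (hC : 0 ≤ C) (ha : 0 < a)
    (hbound : ∀ x y : ℝ, ‖φ (x + y * I)‖ ≤ C * Real.exp (-a * |x| ^ p + b * |y| ^ q)) :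
    ∃ c > 0, ∀ (z : ℂ) (t σ : ℝ), ‖Complex.exp (-z * (t + σ * I)) * φ (t + σ * I)‖ ≤
      C * Real.exp (z.im * σ + b * |σ| ^ q + c * |z.re| ^ p') * Real.exp (-(a / 2) * |t| ^ p) := by
  obtain ⟨c, hc, hkernel⟩ := exists_norm_cexp_neg_mul_mul_exp_le hp ha
  refine ⟨c, hc, fun z t σ => ?_⟩
  calc ‖Complex.exp (-z * (t + σ * I)) * φ (t + σ * I)‖
      ≤ ‖Complex.exp (-z * (t + σ * I))‖ * (C * Real.exp (-a * |t| ^ p + b * |σ| ^ q)) := by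
        rw [norm_mul]; gcongr; exact hbound t σ
    _ = C * Real.exp (b * |σ| ^ q) *
          (‖Complex.exp (-z * (t + σ * I))‖ * Real.exp (-a * |t| ^ p)) := by
        rw [Real.exp_add]; ring
    _ ≤ C * Real.exp (b * |σ| ^ q) *
          (Real.exp (z.im * σ + c * |z.re| ^ p') * Real.exp (-(a / 2) * |t| ^ p)) := by
        gcongr _ * ?_
        exact hkernel z t σ
    _ = _ := by
        simp only [Real.exp_add]; ring

lemma laplaceT_eq_integral_add_mul_I (hφ : Differentiable ℂ φ) (hp : p.HolderConjugate p')
    (hq : 0 ≤ q) (hC : 0 ≤ C) (ha : 0 < a) (hb : 0 ≤ b)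
    (hbound : ∀ x y : ℝ, ‖φ (x + y * I)‖ ≤ C * Real.exp (-a * |x| ^ p + b * |y| ^ q))
    (z : ℂ) (s : ℝ) :
    LaplaceT φ z = ∫ t : ℝ, Complex.exp (-z * (t + s * I)) * φ (t + s * I) := by
  obtain ⟨c, -, hline⟩ := exists_norm_laplace_integrand_le hp hC ha hbound
  set D := C * Real.exp (|z.im| * |s| + b * |s| ^ q + c * |z.re| ^ p')
  refine (integral_add_mul_I_eq_integral (H := fun w => Complex.exp (-z * w) * φ w)
    (by fun_prop) ((integrable_exp_neg_mul_abs_rpow (half_pos ha) hp.pos).const_mul D)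
    (by simpa using (tendsto_exp_neg_mul_abs_rpow_cocompact (half_pos ha) hp.pos).const_mul D)
    fun t σ hσ => (hline z t σ).trans ?_).symm
  have hσs : |σ| ≤ |s| := by simpa using abs_sub_left_of_mem_uIcc hσ
  have h₁ : z.im * σ ≤ |z.im| * |s| :=
    (le_abs_self _).trans (by rw [abs_mul]; exact mul_le_mul_of_nonneg_left hσs (abs_nonneg _))
  have h₂ : b * |σ| ^ q ≤ b * |s| ^ q :=
    mul_le_mul_of_nonneg_left (Real.rpow_le_rpow (abs_nonneg σ) hσs hq) hb
  exact mul_le_mul_of_nonneg_right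
    (mul_le_mul_of_nonneg_left (Real.exp_le_exp.2 (by linarith)) hC) (Real.exp_pos _).le

theorem exists_norm_laplaceT_le (hφ : Differentiable ℂ φ) {q' : ℝ} (hp : p.HolderConjugate p')
    (hq : q.HolderConjugate q') (hC : 0 < C) (ha : 0 < a) (hb : 0 < b)
    (hbound : ∀ x y : ℝ, ‖φ (x + y * I)‖ ≤ C * Real.exp (-a * |x| ^ p + b * |y| ^ q)) :
    ∃ C' > 0, ∃ a' > 0, ∃ b' > 0, ∀ z : ℂ,
      ‖LaplaceT φ z‖ ≤ C' * Real.exp (-a' * |z.im| ^ q' + b' * |z.re| ^ p') := by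
  obtain ⟨c, hc, hline⟩ := exists_norm_laplace_integrand_le hp hC.le ha hbound
  obtain ⟨a', ha', hshift⟩ := exists_mul_add_mul_abs_rpow_le hq hb
  have hint := integrable_exp_neg_mul_abs_rpow (half_pos ha) hp.pos
  set K := ∫ t : ℝ, Real.exp (-(a / 2) * |t| ^ p)
  have hK : 0 < K := integral_exp_pos hint
  refine ⟨C * K, by positivity, a', ha', c, hc, fun z => ?_⟩
  obtain ⟨s, hs⟩ := hshift z.im
  calc ‖LaplaceT φ z‖
      ≤ ∫ t : ℝ, C * Real.exp (z.im * s + b * |s| ^ q + c * |z.re| ^ p') *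
          Real.exp (-(a / 2) * |t| ^ p) := by
        rw [laplaceT_eq_integral_add_mul_I hφ hp hq.nonneg hC.le ha hb.le hbound z s]
        exact norm_integral_le_of_norm_le (hint.const_mul _) (ae_of_all _ fun t => hline z t s)
    _ = C * K * Real.exp (z.im * s + b * |s| ^ q + c * |z.re| ^ p') := by
        rw [integral_const_mul]; ring
    _ ≤ C * K * Real.exp (-a' * |z.im| ^ q' + c * |z.re| ^ p') := by
        gcongr

end HorizontalLines


namespace GelfandShilov1

variable {α β : ℝ} {φ : ℂ → ℂ}

lemma continuous_ofReal (hφ : GelfandShilov1 α β φ) : Continuous fun t : ℝ => φ t :=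
  hφ.1.continuous.comp Complex.continuous_ofReal

lemma exists_norm_ofReal_le (hβ : β < 1) (hφ : GelfandShilov1 α β φ) :
    ∃ C > 0, ∃ a > 0, ∀ t : ℝ, ‖φ t‖ ≤ C * Real.exp (-a * |t| ^ (1 / α)) := by
  obtain ⟨-, C, hC, a, ha, b, -, hbound⟩ := hφ
  refine ⟨C, hC, a, ha, fun t => ?_⟩
  simpa [Real.zero_rpow (inv_ne_zero (sub_pos.2 hβ).ne')] using hbound t 0

lemma integrable_ofReal (hα : 0 < α) (hβ : β < 1) (hφ : GelfandShilov1 α β φ) :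
    Integrable fun t : ℝ => φ t := by
  obtain ⟨C, -, a, ha, hbound⟩ := hφ.exists_norm_ofReal_le hβ
  exact ((integrable_exp_neg_mul_abs_rpow ha (one_div_pos.2 hα)).const_mul C).mono'
    hφ.continuous_ofReal.aestronglyMeasurable (ae_of_all _ hbound)

end GelfandShilov1

theorem jstarS_laplaceT {α β : ℝ} (hα : 0 < α ∧ α < 1) (hβ : 0 < β ∧ β < 1) {φ : ℂ → ℂ}
    (hφ : GelfandShilov1 α β φ) : JstarS β α (LaplaceT φ) := by
  have hp := Real.holderConjugate_one_div hα.1 (sub_pos.2 hα.2) (add_sub_cancel α 1)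
  have hq := Real.holderConjugate_one_div (sub_pos.2 hβ.2) hβ.1 (sub_add_cancel 1 β)
  obtain ⟨C₀, hC₀, a₀, ha₀, hbound₀⟩ := hφ.exists_norm_ofReal_le hβ.2
  refine ⟨differentiable_laplaceT hφ.continuous_ofReal hC₀.le ha₀ hp.lt hbound₀, ?_⟩
  obtain ⟨hφd, C, hC, a, ha, b, hb, hbound⟩ := hφ
  obtain ⟨C', hC', a', ha', b', hb', h⟩ := exists_norm_laplaceT_le hφd hp hq hC ha hb hbound
  exact ⟨C', hC', a', ha', b', hb', fun x y => by simpa using h (x + y * I)⟩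

/-- Multiplication by `ρ i` exchanges the real and imaginary directions. -/
lemma JstarS.gelfandShilov1_comp_mul_I {α β ρ : ℝ} (hρ : ρ ≠ 0) {f : ℂ → ℂ} (hf : JstarS β α f) :
    GelfandShilov1 β α fun w => f (ρ * I * w) := by
  obtain ⟨hfd, C, hC, a, ha, b, hb, hbound⟩ := hf
  have hρ' : 0 < |ρ| := abs_pos.2 hρ
  refine ⟨hfd.comp (by fun_prop), C, hC, a * |ρ| ^ (1 / β), by positivity,
    b * |ρ| ^ (1 / (1 - α)), by positivity, fun x y => ?_⟩
  dsimp only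
  have harg : (ρ : ℂ) * I * (x + y * I) = ↑(-(ρ * y)) + ↑(ρ * x) * I := by
    push_cast
    linear_combination (ρ * y : ℂ) * I_sq
  rw [harg]
  refine (hbound _ _).trans_eq ?_
  rw [abs_neg, abs_mul, abs_mul, Real.mul_rpow (abs_nonneg _) (abs_nonneg _),
    Real.mul_rpow (abs_nonneg _) (abs_nonneg _)]
  ring_nf

lemma laplaceT_two_pi_I_mul_eq_fourier (φ : ℂ → ℂ) (ξ : ℝ) :
    LaplaceT φ (2 * π * I * ξ) = 𝓕 (fun t : ℝ => φ t) ξ := by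
  rw [Real.fourier_real_eq_integral_exp_smul, LaplaceT]
  congr 1 with t
  rw [smul_eq_mul]
  congr 2
  push_cast
  ring

theorem Differentiable.eq_of_forall_mul_ofReal_eq {F G : ℂ → ℂ} (hF : Differentiable ℂ F)
    (hG : Differentiable ℂ G) {v : ℂ} (hv : v ≠ 0) (h : ∀ t : ℝ, F (v * t) = G (v * t)) :
    F = G := by
  have hline : Tendsto (fun t : ℝ => v * t) (𝓝[≠] 0) (𝓝[≠] 0) := by
    refine tendsto_nhdsWithin_iff.2 ⟨?_, eventually_nhdsWithin_of_forall fun t ht => ?_⟩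
    · exact ((by fun_prop : Continuous fun t : ℝ => v * t).tendsto' 0 0 (by simp)).mono_left
        nhdsWithin_le_nhds
    · exact mul_ne_zero hv (ofReal_ne_zero.2 ht)
  exact (analyticOnNhd_univ_iff_differentiable.2 hF).eq_of_frequently_eq
    (analyticOnNhd_univ_iff_differentiable.2 hG) (hline.frequently (Frequently.of_forall h))

theorem Continuous.eq_of_fourier_eq {f g : ℝ → ℂ} (hf : Continuous f) (hg : Continuous g)
    (hfi : Integrable f) (hgi : Integrable g) (h : 𝓕 f = 𝓕 g) : f = g := by
  have hsub : 𝓕 (f - g) = 0 := by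
    ext ξ
    simp only [Real.fourier_eq, Pi.sub_apply, smul_sub]
    rw [integral_sub ((Real.fourierIntegral_convergent_iff ξ).2 hfi)
      ((Real.fourierIntegral_convergent_iff ξ).2 hgi), ← Real.fourier_eq, ← Real.fourier_eq, h,
      sub_self, Pi.zero_apply]
  have hinv := (hf.sub hg).fourierInv_fourier_eq (hfi.sub hgi) (hsub ▸ integrable_zero _ _ _)
  rw [hsub] at hinv
  exact sub_eq_zero.1 (hinv.symm.trans (by ext; simp [Real.fourierInv_eq]))

theorem laplaceT_injOn {α β : ℝ} (hα : 0 < α) (hβ : β < 1) :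
    {φ | GelfandShilov1 α β φ}.InjOn LaplaceT := by
  intro φ₁ h₁ φ₂ h₂ heq
  have hreal : (fun t : ℝ => φ₁ t) = fun t : ℝ => φ₂ t :=
    h₁.continuous_ofReal.eq_of_fourier_eq h₂.continuous_ofReal (h₁.integrable_ofReal hα hβ)
      (h₂.integrable_ofReal hα hβ) <| funext fun ξ => by
        rw [← laplaceT_two_pi_I_mul_eq_fourier, ← laplaceT_two_pi_I_mul_eq_fourier, heq]
  exact h₁.1.eq_of_forall_mul_ofReal_eq h₂.1 one_ne_zero fun t => by
    simpa using congr_fun hreal t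

theorem exists_laplaceT_eq {α β : ℝ} (hα : 0 < α ∧ α < 1) (hβ : 0 < β ∧ β < 1) {f : ℂ → ℂ}
    (hf : JstarS β α f) : ∃ φ, GelfandShilov1 α β φ ∧ LaplaceT φ = f := by
  set h : ℂ → ℂ := fun w => f (2 * π * I * w)
  have hh : GelfandShilov1 β α h := by
    simpa using hf.gelfandShilov1_comp_mul_I (ρ := 2 * π) (by positivity)
  set φ : ℂ → ℂ := fun w => LaplaceT h (-(2 * π * I * w))
  have hφ : GelfandShilov1 α β φ := by
    simpa using (jstarS_laplaceT hβ hα hh).gelfandShilov1_comp_mul_I (ρ := -(2 * π))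
      (by simp [Real.pi_ne_zero])
  have hφ_real : (fun t : ℝ => φ t) = 𝓕⁻ fun σ : ℝ => h σ := by
    ext t
    rw [Real.fourierInv_eq_fourier_neg, ← laplaceT_two_pi_I_mul_eq_fourier]
    simp [φ]
  have hFh : Integrable (𝓕 fun σ : ℝ => h σ) := by
    convert (hφ.integrable_ofReal hα.1 hβ.2).comp_neg using 1
    ext ξ
    rw [congr_fun hφ_real, Real.fourierInv_eq_fourier_neg, neg_neg]
  refine ⟨φ, hφ, (jstarS_laplaceT hα hβ hφ).1.eq_of_forall_mul_ofReal_eq hf.1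
    (v := 2 * π * I) (by simp [Real.pi_ne_zero]) fun ξ => ?_⟩
  rw [laplaceT_two_pi_I_mul_eq_fourier, hφ_real,
    hh.continuous_ofReal.fourier_fourierInv_eq (hh.integrable_ofReal hβ.1 hα.2) hFh]

theorem laplace_bijection_GelfandShilov_JstarS_general
    (α β : ℝ) (hα : 0 < α ∧ α < 1) (hβ : 0 < β ∧ β < 1) :
    (∀ φ : ℂ → ℂ, GelfandShilov1 α β φ → JstarS β α (LaplaceT φ)) ∧
    (∀ φ₁ φ₂ : ℂ → ℂ, GelfandShilov1 α β φ₁ → GelfandShilov1 α β φ₂ →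
      LaplaceT φ₁ = LaplaceT φ₂ → φ₁ = φ₂) ∧
    (∀ f : ℂ → ℂ, JstarS β α f → ∃ φ : ℂ → ℂ, GelfandShilov1 α β φ ∧ LaplaceT φ = f) :=
  ⟨fun _ => jstarS_laplaceT hα hβ, fun _ _ h₁ h₂ => laplaceT_injOn hα.1 hβ.2 h₁ h₂,
    fun _ => exists_laplaceT_eq hα hβ⟩

theorem laplace_bijection_GelfandShilov_JstarS
    (α β : ℝ) (hα : 0 < α ∧ α < 1) (hβ : 0 < β ∧ β < 1) (hαβ : 1 ≤ α + β) :
    (∀ φ : ℂ → ℂ, GelfandShilov1 α β φ → JstarS β α (LaplaceT φ)) ∧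
    (∀ φ₁ φ₂ : ℂ → ℂ, GelfandShilov1 α β φ₁ → GelfandShilov1 α β φ₂ →
      LaplaceT φ₁ = LaplaceT φ₂ → φ₁ = φ₂) ∧
    (∀ f : ℂ → ℂ, JstarS β α f → ∃ φ : ℂ → ℂ, GelfandShilov1 α β φ ∧ LaplaceT φ = f) :=
  laplace_bijection_GelfandShilov_JstarS_general α β hα hβ
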